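/- Let p > 2 and M > 0, and let γ ∈ W^{2,p}(ℝ/ℤ, ℝⁿ) be a closed curve parametrised by arc-length with ‖γ'‖_{W^{1,p}} ≤ M. Then for ε = ε(p, M) > 0 as in the approximate tangent lemma, the unit tangent map τ = γ'_ε/|γ'_ε| : ℝ/ℤ → S^{n−1} of the mollified curve γ_ε is smooth and satisfies ‖τ'‖_{L^∞} ≤ C and ‖τ''‖_{L^∞} ≤ C for a constant C = C(p, M) > 0. -/

import Mathlib

open MeasureTheory Real Filter Set
open scoped ENNReal

noncomputable section

/-- Euclidean space `ℝⁿ`. -/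
abbrev En (n : ℕ) := EuclideanSpace ℝ (Fin n)

/-- The real inner product on `ℝⁿ`. -/
def rinner {n : ℕ} (x y : En n) : ℝ := inner ℝ x y

/-- Orthogonal projection of `w` onto the line spanned by `v`: `P^T_v w`. -/
def projTan {n : ℕ} (v w : En n) : En n := (rinner w v / ‖v‖ ^ 2) • v

/-- Orthogonal projection of `w` onto the orthogonal complement of `v`: `P^⊥_v w`. -/
def projPerp {n : ℕ} (v w : En n) : En n := w - projTan v w

/-- The sup (`L^∞`) norm of a function. -/
def supNorm {n : ℕ} (f : ℝ → En n) : ℝ := ⨆ x : ℝ, ‖f x‖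

/-- The `C^{1/2}`-Hölder seminorm of a function. -/
def holderHalfNorm {n : ℕ} (f : ℝ → En n) : ℝ :=
  ⨆ q : ℝ × ℝ, if q.1 = q.2 then 0 else ‖f q.1 - f q.2‖ / |q.1 - q.2| ^ ((1 : ℝ) / 2)

/-- Mollification `γ * η_ε` with the rescaled mollifier `η_ε(y) = ε⁻¹ η(y/ε)`. -/
def mollify {n : ℕ} (η : ℝ → ℝ) (ε : ℝ) (γ : ℝ → En n) (x : ℝ) : En n :=
  ∫ y : ℝ, (ε⁻¹ * η (y / ε)) • γ (x - y)

/-- `η` is a mollifier. -/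
structure IsMollifier (η : ℝ → ℝ) : Prop where
  smooth : ContDiff ℝ (⊤ : ℕ∞) η
  nonneg : ∀ x, 0 ≤ η x
  vanish : ∀ x, 1 ≤ |x| → η x = 0
  integral_one : (∫ x : ℝ, η x) = 1

/-- `f` is a closed curve of class `W^{2,p}(ℝ/Lℤ, ℝⁿ)` with (weak) second derivative `f₂`:
`f` is `C¹`, `L`-periodic, `deriv f` is an indefinite integral of `f₂`, and `f₂ ∈ L^p`. -/
structure IsW2p {n : ℕ} (p L : ℝ) (f f₂ : ℝ → En n) : Prop where
  periodic : Function.Periodic f L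
  contDiff : ContDiff ℝ 1 f
  ftc : ∀ x, deriv f x = deriv f 0 + ∫ y in (0:ℝ)..x, f₂ y
  memLp : MemLp f₂ (ENNReal.ofReal p) (volume.restrict (Set.Ioc (0:ℝ) L))

/-- `f` is a closed curve of class `W^{3,p}(ℝ/Lℤ, ℝⁿ)` with second derivative `f₂` and third
derivative `f₃`. -/
structure IsW3p {n : ℕ} (p L : ℝ) (f f₂ f₃ : ℝ → En n) : Prop where
  base : IsW2p p L f f₂
  ftc2 : ∀ x, f₂ x = f₂ 0 + ∫ y in (0:ℝ)..x, f₃ y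
  memLp : MemLp f₃ (ENNReal.ofReal p) (volume.restrict (Set.Ioc (0:ℝ) L))

/-- A curve is parametrised by arc-length when its derivative has unit length. -/
def ArcLength {n : ℕ} (f : ℝ → En n) : Prop := ∀ x, ‖deriv f x‖ = 1

/-- `L^p`-norm over one period. -/
def lpNorm {n : ℕ} (p L : ℝ) (f : ℝ → En n) : ℝ :=
  (∫ x in (0:ℝ)..L, ‖f x‖ ^ p) ^ (1 / p)

/-- `L²`-norm over one period. -/
def l2Norm {n : ℕ} (L : ℝ) (f : ℝ → En n) : ℝ :=
  (∫ x in (0:ℝ)..L, ‖f x‖ ^ 2) ^ (1 / (2:ℝ))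

/-- `W^{1,p}`-norm of `f` with derivative `f'` over one period. -/
def w1pNormD {n : ℕ} (p L : ℝ) (f f' : ℝ → En n) : ℝ :=
  (∫ x in (0:ℝ)..L, (‖f x‖ ^ p + ‖f' x‖ ^ p)) ^ (1 / p)

/-- `W^{2,p}`-norm of `f` with derivatives `f'`, `f₂` over one period. -/
def w2pNormD {n : ℕ} (p L : ℝ) (f f' f₂ : ℝ → En n) : ℝ :=
  (∫ x in (0:ℝ)..L, (‖f x‖ ^ p + ‖f' x‖ ^ p + ‖f₂ x‖ ^ p)) ^ (1 / p)

/-- `C¹`-norm. -/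
def c1Norm {n : ℕ} (f : ℝ → En n) : ℝ := supNorm f + supNorm (deriv f)

/-- `τ` is a unit quasi-tangent to the curve `g` (relative to the mollifier `η`): it is the
unit tangent of a mollification `g_ε` of `g` and is `L^∞`-close to `g'`. -/
def IsQuasiTangent {n : ℕ} (η : ℝ → ℝ) (g τ : ℝ → En n) : Prop :=
  ∃ ε > 0, (∀ x, deriv (mollify η ε g) x ≠ 0) ∧
    (∀ x, τ x = ‖deriv (mollify η ε g) x‖⁻¹ • deriv (mollify η ε g) x) ∧
    ∀ x, ‖τ x - deriv g x‖ ≤ 1 / 4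

/-- An (orientation preserving) reparametrisation of `ℝ/Lℤ`, written as a lift `σ : ℝ → ℝ`. -/
def IsReparam (L : ℝ) (σ : ℝ → ℝ) : Prop :=
  ContDiff ℝ 1 σ ∧ (∀ x, σ (x + L) = σ x + L) ∧ ∀ x, 0 < deriv σ x

/-- The curvature vector `κ = P^⊥_{g'}(g₂)/|g'|²` of a curve `g` with second derivative `g₂`. -/
def curvatureD {n : ℕ} (g g₂ : ℝ → En n) (x : ℝ) : En n :=
  (‖deriv g x‖ ^ 2)⁻¹ • projPerp (deriv g x) (g₂ x)

/-- The `p`-elastic energy `(1/p)∫ |κ|^p ds` of a closed curve over one period. -/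
def pElasticD {n : ℕ} (p L : ℝ) (g g₂ : ℝ → En n) : ℝ :=
  (1 / p) * ∫ x in (0:ℝ)..L, ‖curvatureD g g₂ x‖ ^ p * ‖deriv g x‖

/-- The energy `E(γ) = (1/p)∫ |κ|^p ds + λ ∫ ds`. -/
def energyD {n : ℕ} (p lam L : ℝ) (g g₂ : ℝ → En n) : ℝ :=
  pElasticD p L g g₂ + lam * ∫ x in (0:ℝ)..L, ‖deriv g x‖

/-- The unit tangent `∂_s g = g'/|g'|`. -/
def unitTangentD {n : ℕ} (g : ℝ → En n) (x : ℝ) : En n := ‖deriv g x‖⁻¹ • deriv g x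

/-- The arc-length derivative `∂_s ψ = ψ'/|g'|` of `ψ` (with data `ψ'`) along the curve `g`. -/
def arcDeriv {n : ℕ} (g ψ' : ℝ → En n) (x : ℝ) : En n := ‖deriv g x‖⁻¹ • ψ' x

/-- The second arc-length derivative
`∂²_s ψ = ψ''/|g'|² − ⟨g'/|g'|, g''⟩ ψ' /|g'|³` of `ψ` along the curve `g`. -/
def arcDeriv2 {n : ℕ} (g g₂ ψ' ψ₂ : ℝ → En n) (x : ℝ) : En n :=
  (‖deriv g x‖ ^ 2)⁻¹ • ψ₂ x - (rinner (deriv g x) (g₂ x) / ‖deriv g x‖ ^ 4) • ψ' x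

/-- The first variation of the curvature,
`δ_ψ κ = (∂²_s ψ)^⊥ − ⟨κ, ∂_s ψ⟩ ∂_s g − 2 ⟨∂_s g, ∂_s ψ⟩ κ`. -/
def deltaKappa {n : ℕ} (g g₂ ψ' ψ₂ : ℝ → En n) (x : ℝ) : En n :=
  projPerp (deriv g x) (arcDeriv2 g g₂ ψ' ψ₂ x)
    - rinner (curvatureD g g₂ x) (arcDeriv g ψ' x) • unitTangentD g x
    - (2 * rinner (unitTangentD g x) (arcDeriv g ψ' x)) • curvatureD g g₂ x

/-- The first variation of the `p`-elastic energy,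
`δ_ψ E^{(p)}(g) = ∫ |κ|^{p−2} ⟨κ, δ_ψ κ⟩ ds + (1/p)∫ |κ|^p ⟨∂_s g, ∂_s ψ⟩ ds`. -/
def firstVarPElastic {n : ℕ} (p L : ℝ) (g g₂ ψ' ψ₂ : ℝ → En n) : ℝ :=
  ∫ x in (0:ℝ)..L,
    (‖curvatureD g g₂ x‖ ^ (p - 2) * rinner (curvatureD g g₂ x) (deltaKappa g g₂ ψ' ψ₂ x)
      + (1 / p) * ‖curvatureD g g₂ x‖ ^ p * rinner (unitTangentD g x) (arcDeriv g ψ' x))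
      * ‖deriv g x‖

/-- The first variation of the full energy `E = E^{(p)} + λ Length`. -/
def firstVarEnergy {n : ℕ} (p lam L : ℝ) (g g₂ ψ' ψ₂ : ℝ → En n) : ℝ :=
  firstVarPElastic p L g g₂ ψ' ψ₂
    + lam * ∫ x in (0:ℝ)..L, rinner (unitTangentD g x) (arcDeriv g ψ' x) * ‖deriv g x‖

/-- The tubular neighbourhood map `H_{x₀}(x,v) = γ(x) + P^⊥_{τ(x)} v`. -/
def tubeMap {n : ℕ} (γ τ : ℝ → En n) (z : ℝ × En n) : En n := γ z.1 + projPerp (τ z.1) z.2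

/-- The domain `B_δ(x₀) × B_δ(0) ⊆ (ℝ/ℤ) × 𝒩_{x₀}` of the tubular neighbourhood map, where
`𝒩_{x₀} = {v : P^T_{τ(x₀)} v = 0}` is the approximate normal space. -/
def tubeDom {n : ℕ} (τ : ℝ → En n) (x₀ δ : ℝ) : Set (ℝ × En n) :=
  {z | |z.1 - x₀| < δ ∧ ‖z.2‖ < δ ∧ rinner z.2 (τ x₀) = 0}

/-- A perturbation of class `W^{2,p}(ℝ/Lℤ, ℝⁿ)`, bundled with its second derivative. -/
structure W2pPert (n : ℕ) (p L : ℝ) where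
  f : ℝ → En n
  f₂ : ℝ → En n
  isW2p : IsW2p p L f f₂

/-- Membership in the admissible class
`𝒱(μ,W) = {φ ∈ (W^{2,p})^⊥_τ : ‖φ‖_{L^∞} < 3μ, ‖φ'‖_{L^∞} < 3W}`. -/
def inV {n : ℕ} {p L : ℝ} (τ : ℝ → En n) (μ W : ℝ) (φ : W2pPert n p L) : Prop :=
  (∀ x, rinner (φ.f x) (τ x) = 0) ∧ supNorm φ.f < 3 * μ ∧ supNorm (deriv φ.f) < 3 * W

/-- The minimising movement functional
`ℱ_j(φ) = E(γ̃+φ) + (1/2h) ∫ |P^⊥_{γ_{t_j}'}(γ̃+φ−γ_{t_j})|² |γ_{t_j}'| dx`,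
where `γ_{t_j} = γ̃ + φprev`. -/
def mmFunctional {n : ℕ} (p lam L h : ℝ) (γt : ℝ → En n) (φprev φ : W2pPert n p L) : ℝ :=
  energyD p lam L (fun x => γt x + φ.f x) (fun x => deriv (deriv γt) x + φ.f₂ x)
    + (1 / (2 * h)) * ∫ x in (0:ℝ)..L,
        ‖projPerp (deriv γt x + deriv φprev.f x) (φ.f x - φprev.f x)‖ ^ 2
          * ‖deriv γt x + deriv φprev.f x‖

/-- The energy of the discrete-time curve `γ_{t_j} = γ̃ + φ_j`. -/
def discEnergy {n : ℕ} {p L : ℝ} (lam : ℝ) (γt : ℝ → En n) (φj : W2pPert n p L) : ℝ :=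
  energyD p lam L (fun x => γt x + φj.f x) (fun x => deriv (deriv γt) x + φj.f₂ x)

/-- `φ : ℕ → W2pPert` is a discrete-time solution of the minimising movement scheme with step
size `h`, initial datum `Φ`, up to time `T`. -/
def IsMMSol {n : ℕ} (p lam L h T : ℝ) (γt τ : ℝ → En n) (μ W : ℝ)
    (Φ : W2pPert n p L) (φ : ℕ → W2pPert n p L) : Prop :=
  φ 0 = Φ ∧ ∀ j : ℕ, ((j : ℝ) + 1) * h < T →
    inV τ μ W (φ (j + 1)) ∧
      ∀ ψ : W2pPert n p L, inV τ μ W ψ →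
        mmFunctional p lam L h γt (φ j) (φ (j + 1)) ≤ mmFunctional p lam L h γt (φ j) ψ

/-- The piecewise linear interpolation in time `φ^{(h)}` of a discrete family. -/
def interpPert {n : ℕ} {p L : ℝ} (h : ℝ) (φ : ℕ → W2pPert n p L) (t s : ℝ) : En n :=
  (φ ⌊t / h⌋₊).f s
    + ((t - (⌊t / h⌋₊ : ℝ) * h) / h) • ((φ (⌊t / h⌋₊ + 1)).f s - (φ ⌊t / h⌋₊).f s)

/-- The piecewise linear interpolation of the second derivatives of a discrete family. -/
def interpPert2 {n : ℕ} {p L : ℝ} (h : ℝ) (φ : ℕ → W2pPert n p L) (t s : ℝ) : En n :=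
  (φ ⌊t / h⌋₊).f₂ s
    + ((t - (⌊t / h⌋₊ : ℝ) * h) / h) • ((φ (⌊t / h⌋₊ + 1)).f₂ s - (φ ⌊t / h⌋₊).f₂ s)

/-- The full setting of the minimising movement scheme: an initial arc-length curve `Γ` of
length `L` and energy at most `E₀`, written as an approximate normal graph `Γ ∘ σ = γ̃ + Φ`
over a smooth arc-length curve `γ̃` with unit quasi-tangent `τ`, with `‖Φ‖_{L^∞} ≤ μ` and
`‖Φ'‖_{L^∞} ≤ W`. -/
structure MMSetup (n : ℕ) (p lam E₀ : ℝ) (η : ℝ → ℝ) where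
  L : ℝ
  hL : 0 < L
  Γ : ℝ → En n
  Γ₂ : ℝ → En n
  hΓ : IsW2p p L Γ Γ₂
  hArc : ArcLength Γ
  hE : energyD p lam L Γ Γ₂ ≤ E₀
  gref : ℝ → En n
  hsmooth : ContDiff ℝ (⊤ : ℕ∞) gref
  hper : Function.Periodic gref L
  harc : ArcLength gref
  τ : ℝ → En n
  hτ : IsQuasiTangent η gref τ
  σ : ℝ → ℝ
  hσ : IsReparam L σ
  Φ : W2pPert n p L
  μ : ℝ
  W : ℝ
  hμ : 0 < μ
  hW : 2 < W
  hdecomp : ∀ x, Γ (σ x) = gref x + Φ.f x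
  horth : ∀ x, rinner (Φ.f x) (τ x) = 0
  hΦμ : supNorm Φ.f ≤ μ
  hΦW : supNorm (deriv Φ.f) ≤ W

/-- The `L²`-in-time `W^{1,1}`-in-space norm of a time dependent family. -/
def l2w11 {n : ℕ} (T L : ℝ) (F : ℝ → ℝ → En n) : ℝ :=
  (∫ t in (0:ℝ)..T, (∫ s in (0:ℝ)..L, (‖F t s‖ + ‖deriv (F t) s‖)) ^ 2) ^ (1 / (2:ℝ))

/-- The `L²`-in-time `L^∞`-in-space norm of a time dependent family. -/
def l2linf {n : ℕ} (T : ℝ) (F : ℝ → ℝ → En n) : ℝ :=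
  (∫ t in (0:ℝ)..T, (supNorm (F t)) ^ 2) ^ (1 / (2:ℝ))

end

/-!
Since `γ'' ∈ Lᵖ` with `p > 2`, Hölder's inequality and periodicity give
`|γ'(x) - γ'(y)| ≤ 2M |x - y|^(1 - 1/p)`. Choosing `ε` with `2M ε^(1 - 1/p) ≤ 1/8`, the tangent
`v = (γ_ε)' = η_ε * γ'` of the mollified curve stays within `1/8` of the unit vector `γ'`, so
`|v| ≥ 1/2` and `v/|v|` is within `1/4` of `γ'`. Derivatives of `v` fall on the kernel, so
`|v⁽ᵏ⁾| ≤ ∫ |η_ε⁽ᵏ⁾|`, and the derivatives of `v/|v|` are bounded by the ratios `|v⁽ᵏ⁾|/|v|`;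
hence `C` depends only on `p`, `M` (through `ε`) and `η`.
-/

open scoped RealInnerProductSpace Convolution Topology
open ContinuousLinearMap (lsmul)

theorem norm_intervalIntegral_le_eLpNorm_mul {E : Type*} [NormedAddCommGroup E] [NormedSpace ℝ E]
    {f : ℝ → E} {p a b : ℝ} (hp : 1 ≤ p) (hab : a ≤ b)
    (hf : MemLp f (ENNReal.ofReal p) (volume.restrict (Ioc a b))) :
    ‖∫ y in a..b, f y‖
      ≤ (eLpNorm f (ENNReal.ofReal p) (volume.restrict (Ioc a b))).toReal
        * (b - a) ^ (1 - 1 / p) := by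
  have hp' : (1 : ℝ≥0∞) ≤ ENNReal.ofReal p := by simpa using ENNReal.ofReal_le_ofReal hp
  have hholder := eLpNorm_le_eLpNorm_mul_rpow_measure_univ hp' hf.1
  rw [Measure.restrict_apply_univ, Real.volume_Ioc, ENNReal.toReal_ofReal (by linarith)] at hholder
  calc ‖∫ y in a..b, f y‖ ≤ ∫ y in Ioc a b, ‖f y‖ := by
        rw [intervalIntegral.integral_of_le hab]; exact norm_integral_le_integral_norm _
    _ = (eLpNorm f 1 (volume.restrict (Ioc a b))).toReal := by
        rw [integral_norm_eq_lintegral_enorm hf.1, eLpNorm_one_eq_lintegral_enorm]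
    _ ≤ (eLpNorm f (ENNReal.ofReal p) (volume.restrict (Ioc a b))
          * ENNReal.ofReal (b - a) ^ (1 - 1 / p)).toReal := by
        refine ENNReal.toReal_mono ?_ (by simpa using hholder)
        exact ENNReal.mul_ne_top hf.2.ne
          (ENNReal.rpow_ne_top_of_nonneg (by bound) ENNReal.ofReal_ne_top)
    _ = _ := by
        rw [ENNReal.toReal_mul, ← ENNReal.toReal_rpow, ENNReal.toReal_ofReal (by linarith)]

theorem Function.Periodic.norm_sub_le_of_holder_on_period {E : Type*} [NormedAddCommGroup E]
    {f : ℝ → E} {T K α : ℝ} (hf : Function.Periodic f T) (hT : 0 < T) (hK : 0 ≤ K) (hα : 0 ≤ α)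
    (h : ∀ a b, 0 ≤ a → a ≤ b → b ≤ T → ‖f b - f a‖ ≤ K * (b - a) ^ α)
    {x y : ℝ} (hxy : x ≤ y) (hyx : y - x ≤ T) :
    ‖f y - f x‖ ≤ 2 * K * (y - x) ^ α := by
  set m := ⌊x / T⌋
  have ha0 : 0 ≤ x - m * T := by
    have := Int.floor_le (x / T); rw [le_div_iff₀ hT] at this; linarith
  have ha1 : x - m * T < T := by
    have := Int.lt_floor_add_one (x / T); rw [div_lt_iff₀ hT] at this; linarith
  have hfx : f (x - m * T) = f x := hf.sub_int_mul_eq m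
  have hfy : f (y - m * T) = f y := hf.sub_int_mul_eq m
  have hmono : ∀ d, 0 ≤ d → d ≤ y - x → K * d ^ α ≤ K * (y - x) ^ α := fun d hd hdle => by
    gcongr
  rcases le_or_gt (y - m * T) T with hle | hlt
  · have := h _ _ ha0 (by linarith) hle
    rw [hfx, hfy, show y - m * T - (x - m * T) = y - x by ring] at this
    linarith [mul_nonneg hK (Real.rpow_nonneg (sub_nonneg.2 hxy) α)]
  · have hT0 : f T = f 0 := by simpa using hf 0
    have h1 := h 0 (y - m * T - T) le_rfl (by linarith) (by linarith)
    have h2 := h (x - m * T) T ha0 ha1.le le_rfl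
    rw [show y - m * T - T = y - ((m + 1 : ℤ) : ℝ) * T by push_cast; ring,
      hf.sub_int_mul_eq, ← hT0] at h1
    rw [hfx] at h2
    calc ‖f y - f x‖ ≤ ‖f y - f T‖ + ‖f T - f x‖ := norm_sub_le_norm_sub_add_norm_sub _ _ _
      _ ≤ K * (y - x) ^ α + K * (y - x) ^ α := by
        gcongr
        · exact h1.trans (hmono _ (by push_cast; linarith) (by push_cast; linarith))
        · exact h2.trans (hmono _ (by linarith) (by linarith))
      _ = 2 * K * (y - x) ^ α := by ring

theorem eLpNorm_le_of_w1pNormD_le {n : ℕ} {p L M : ℝ} {f f' : ℝ → En n} (hp : 0 < p) (hL : 0 ≤ L)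
    (hf : Continuous f) (hf' : MemLp f' (ENNReal.ofReal p) (volume.restrict (Ioc 0 L)))
    (h : w1pNormD p L f f' ≤ M) :
    eLpNorm f' (ENNReal.ofReal p) (volume.restrict (Ioc 0 L)) ≤ ENNReal.ofReal M := by
  have hp0 : ENNReal.ofReal p ≠ 0 := by simpa using hp
  have hint' := hf'.integrable_norm_rpow hp0 ENNReal.ofReal_ne_top
  rw [ENNReal.toReal_ofReal hp.le] at hint'
  have hint : IntegrableOn (fun x => ‖f x‖ ^ p) (Ioc 0 L) :=
    (hf.norm.rpow_const fun _ => Or.inr hp.le).integrableOn_Ioc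
  rw [hf'.eLpNorm_eq_integral_rpow_norm hp0 ENNReal.ofReal_ne_top, ENNReal.toReal_ofReal hp.le]
  refine ENNReal.ofReal_le_ofReal (le_trans ?_ h)
  rw [w1pNormD, intervalIntegral.integral_of_le hL, one_div]
  refine Real.rpow_le_rpow (integral_nonneg fun x => by positivity) ?_ (by positivity)
  exact integral_mono hint' (hint.add hint') fun x => le_add_of_nonneg_left (by positivity)

theorem IsW2p.norm_deriv_sub_le_of_subinterval {n : ℕ} {p L M : ℝ} {γ γ₂ : ℝ → En n}
    (hγ : IsW2p p L γ γ₂) (hp : 1 ≤ p) (hM : 0 ≤ M) (hw : w1pNormD p L (deriv γ) γ₂ ≤ M)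
    {a b : ℝ} (ha : 0 ≤ a) (hab : a ≤ b) (hb : b ≤ L) :
    ‖deriv γ b - deriv γ a‖ ≤ M * (b - a) ^ (1 - 1 / p) := by
  have hγ₂ : IntegrableOn γ₂ (Ioc 0 L) := by
    have : IsFiniteMeasure (volume.restrict (Ioc (0 : ℝ) L)) := by
      rw [isFiniteMeasure_restrict]; exact measure_Ioc_lt_top.ne
    exact hγ.memLp.integrable (by simpa using ENNReal.ofReal_le_ofReal hp)
  have hsub : Ioc a b ⊆ Ioc 0 L := Ioc_subset_Ioc ha hb
  have hftc : deriv γ b - deriv γ a = ∫ y in a..b, γ₂ y := by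
    rw [hγ.ftc b, hγ.ftc a, add_sub_add_left_eq_sub]
    refine intervalIntegral.integral_interval_sub_left ?_ ?_ <;>
      refine (intervalIntegrable_iff_integrableOn_Ioc_of_le (by linarith)).2
        (hγ₂.mono_set (Ioc_subset_Ioc le_rfl (by linarith)))
  have hLp := eLpNorm_le_of_w1pNormD_le (by linarith) (by linarith)
    (hγ.contDiff.continuous_deriv le_rfl) hγ.memLp hw
  have hLp' : eLpNorm γ₂ (ENNReal.ofReal p) (volume.restrict (Ioc a b)) ≤ ENNReal.ofReal M :=
    (eLpNorm_mono_measure _ (Measure.restrict_mono hsub le_rfl)).trans hLp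
  rw [hftc]
  refine (norm_intervalIntegral_le_eLpNorm_mul hp hab (hγ.memLp.mono_measure
    (Measure.restrict_mono hsub le_rfl))).trans ?_
  gcongr
  exact ENNReal.toReal_le_of_le_ofReal hM hLp'

theorem IsW2p.norm_deriv_sub_le {n : ℕ} {p L M : ℝ} {γ γ₂ : ℝ → En n}
    (hγ : IsW2p p L γ γ₂) (hL : 0 < L) (hp : 1 ≤ p) (hM : 0 ≤ M)
    (hw : w1pNormD p L (deriv γ) γ₂ ≤ M) {x y : ℝ} (hxy : |x - y| ≤ L) :
    ‖deriv γ x - deriv γ y‖ ≤ 2 * M * |x - y| ^ (1 - 1 / p) := by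
  have hper : Function.Periodic (deriv γ) L := fun t => by
    rw [← deriv_comp_add_const, show (fun s => γ (s + L)) = γ from funext hγ.periodic]
  have hα : 0 ≤ 1 - 1 / p := by
    rw [sub_nonneg, div_le_one (by linarith)]; exact hp
  have hholder := fun {x y : ℝ} (hxy : x ≤ y) (hyx : y - x ≤ L) =>
    hper.norm_sub_le_of_holder_on_period hL hM hα
      (fun a b ha hab hb => hγ.norm_deriv_sub_le_of_subinterval hp hM hw ha hab hb) hxy hyx
  rcases le_total x y with h | h
  · rw [norm_sub_rev, abs_sub_comm, abs_of_nonneg (sub_nonneg.2 h)]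
    exact hholder h (by rwa [abs_sub_comm, abs_of_nonneg (sub_nonneg.2 h)] at hxy)
  · rw [abs_of_nonneg (sub_nonneg.2 h)]
    exact hholder h (by rwa [abs_of_nonneg (sub_nonneg.2 h)] at hxy)

noncomputable def scaledMollifier (η : ℝ → ℝ) (ε : ℝ) (y : ℝ) : ℝ := ε⁻¹ * η (y / ε)

theorem mollify_eq_convolution {n : ℕ} (η : ℝ → ℝ) (ε : ℝ) (γ : ℝ → En n) :
    mollify η ε γ = scaledMollifier η ε ⋆[lsmul ℝ ℝ] γ := by
  rfl

namespace IsMollifier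

variable {η : ℝ → ℝ} (hη : IsMollifier η) {ε : ℝ}
include hη

theorem contDiff_scaledMollifier : ContDiff ℝ (⊤ : ℕ∞) (scaledMollifier η ε) :=
  contDiff_const.mul (hη.smooth.comp (contDiff_id.div_const ε))

theorem scaledMollifier_nonneg (hε : 0 < ε) (y : ℝ) : 0 ≤ scaledMollifier η ε y :=
  mul_nonneg (inv_nonneg.2 hε.le) (hη.nonneg _)

theorem scaledMollifier_eq_zero (hε : 0 < ε) {y : ℝ} (hy : ε ≤ |y|) :
    scaledMollifier η ε y = 0 := by
  rw [scaledMollifier, hη.vanish _ (by rwa [abs_div, abs_of_pos hε, le_div_iff₀ hε, one_mul]),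
    mul_zero]

theorem hasCompactSupport_scaledMollifier (hε : 0 < ε) : HasCompactSupport (scaledMollifier η ε) :=
  HasCompactSupport.intro (isCompact_closedBall (0 : ℝ) ε) fun y hy =>
    hη.scaledMollifier_eq_zero hε (by simpa using hy : ε < |y|).le

theorem integral_scaledMollifier (hε : 0 < ε) : ∫ y, scaledMollifier η ε y = 1 := by
  simp only [scaledMollifier]
  rw [integral_const_mul, Measure.integral_comp_div, hη.integral_one, abs_of_pos hε, smul_eq_mul,
    mul_one, inv_mul_cancel₀ hε.ne']

end IsMollifier

section Convolution

variable {E : Type*} [NormedAddCommGroup E] [NormedSpace ℝ E] {ψ : ℝ → ℝ}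

theorem HasCompactSupport.integrable_smul_comp_sub (hψs : HasCompactSupport ψ) (hψc : Continuous ψ)
    {g : ℝ → E} (hg : Continuous g) (x : ℝ) : Integrable fun y => ψ y • g (x - y) :=
  (hψc.smul (hg.comp (continuous_const.sub continuous_id))).integrable_of_hasCompactSupport
    hψs.smul_right

theorem norm_convolution_le {g : ℝ → E} {K : ℝ} (hψ : Integrable ψ) (hg : ∀ x, ‖g x‖ ≤ K) (x : ℝ) :
    ‖(ψ ⋆[lsmul ℝ ℝ] g) x‖ ≤ (∫ y, |ψ y|) * K := by
  rw [← integral_mul_const]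
  refine norm_integral_le_of_norm_le (hψ.abs.mul_const K) (.of_forall fun y => ?_)
  simp only [ContinuousLinearMap.lsmul_apply, norm_smul, Real.norm_eq_abs]
  exact mul_le_mul_of_nonneg_left (hg _) (abs_nonneg _)

theorem norm_convolution_sub_le [CompleteSpace E] {g : ℝ → E} (hψc : Continuous ψ)
    (hψs : HasCompactSupport ψ) (hψ0 : ∀ y, 0 ≤ ψ y) (hψ1 : ∫ y, ψ y = 1) (hg : Continuous g)
    {x δ : ℝ}
    (h : ∀ y, ψ y ≠ 0 → ‖g (x - y) - g x‖ ≤ δ) :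
    ‖(ψ ⋆[lsmul ℝ ℝ] g) x - g x‖ ≤ δ := by
  have hψ : Integrable ψ := hψc.integrable_of_hasCompactSupport hψs
  have hsub : (ψ ⋆[lsmul ℝ ℝ] g) x - g x = ∫ y, ψ y • (g (x - y) - g x) := by
    simp only [smul_sub]
    rw [integral_sub (hψs.integrable_smul_comp_sub hψc hg x) (hψ.smul_const _),
      integral_smul_const, hψ1, one_smul]
    rfl
  calc _ = ‖∫ y, ψ y • (g (x - y) - g x)‖ := by rw [hsub]
    _ ≤ ∫ y, ψ y * δ := norm_integral_le_of_norm_le (hψ.mul_const δ) (.of_forall fun y => by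
        rcases eq_or_ne (ψ y) 0 with hy | hy
        · simp [hy]
        · rw [norm_smul, Real.norm_of_nonneg (hψ0 y)]
          exact mul_le_mul_of_nonneg_left (h y hy) (hψ0 y))
    _ = δ := by rw [integral_mul_const, hψ1, one_mul]

/-- Unlike `HasCompactSupport.hasDerivAt_convolution_right`, the derivative falls on the factor
without compact support; it is bounded, so one differentiates under the integral sign. -/
theorem hasDerivAt_convolution_of_contDiff_one [CompleteSpace E] {γ : ℝ → E} {K : ℝ}
    (hψc : Continuous ψ) (hψs : HasCompactSupport ψ) (hγ : ContDiff ℝ 1 γ)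
    (hK : ∀ x, ‖deriv γ x‖ ≤ K) (x : ℝ) :
    HasDerivAt (ψ ⋆[lsmul ℝ ℝ] γ)
      ((ψ ⋆[lsmul ℝ ℝ] deriv γ) x) x := by
  have hF := hψs.integrable_smul_comp_sub hψc hγ.continuous
  have hF' := hψs.integrable_smul_comp_sub hψc (hγ.continuous_deriv le_rfl) x
  refine (hasDerivAt_integral_of_dominated_loc_of_deriv_le (F := fun x y => ψ y • γ (x - y))
    (F' := fun x y => ψ y • deriv γ (x - y)) (bound := fun y => |ψ y| * K)
    (Metric.ball_mem_nhds x one_pos) (.of_forall fun x' => (hF x').1) (hF x) hF'.1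
    (.of_forall fun y x' _ => ?_)
    ((hψc.integrable_of_hasCompactSupport hψs).abs.mul_const K)
    (.of_forall fun y x' _ => ?_)).2
  · rw [norm_smul, Real.norm_eq_abs]
    exact mul_le_mul_of_nonneg_left (hK _) (abs_nonneg _)
  · exact (((hγ.differentiable one_ne_zero _).hasDerivAt.scomp x'
      ((hasDerivAt_id x').sub_const y)).const_smul (ψ y)).congr_deriv (by simp)

end Convolution

theorem norm_inv_norm_smul_sub_le {E : Type*} [NormedAddCommGroup E] [NormedSpace ℝ E] {v g : E}
    (hg : ‖g‖ = 1) : ‖‖v‖⁻¹ • v - g‖ ≤ 2 * ‖v - g‖ := by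
  have hrad : ‖‖v‖⁻¹ • v - v‖ ≤ ‖v - g‖ := by
    rcases eq_or_ne v 0 with rfl | hv
    · simp
    calc ‖‖v‖⁻¹ • v - v‖ = |(‖v‖⁻¹ - 1) * ‖v‖| := by
            rw [show ‖v‖⁻¹ • v - v = (‖v‖⁻¹ - 1) • v by rw [sub_smul, one_smul], norm_smul,
              Real.norm_eq_abs, abs_mul, abs_norm]
      _ = |‖g‖ - ‖v‖| := by rw [sub_mul, inv_mul_cancel₀ (norm_ne_zero_iff.2 hv), one_mul, hg]
      _ ≤ ‖v - g‖ := by rw [norm_sub_rev]; exact abs_norm_sub_norm_le g v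
  calc ‖‖v‖⁻¹ • v - g‖ ≤ ‖‖v‖⁻¹ • v - v‖ + ‖v - g‖ := norm_sub_le_norm_sub_add_norm_sub _ _ _
    _ ≤ 2 * ‖v - g‖ := by linarith

section Normalize

variable {E : Type*} [NormedAddCommGroup E] [InnerProductSpace ℝ E] {v v₁ v₂ : ℝ → E}

theorem HasDerivAt.norm_inv {v' : E} {t : ℝ} (hv : HasDerivAt v v' t) (h0 : v t ≠ 0) :
    HasDerivAt (fun s => ‖v s‖⁻¹) (-(⟪v t, v'⟫ * ‖v t‖⁻¹ ^ 3)) t := by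
  have hN : 0 < ‖v t‖ := norm_pos_iff.2 h0
  have hnorm : HasDerivAt (fun s => ‖v s‖) (⟪v t, v'⟫ / ‖v t‖) t := by
    convert hv.norm_sq.sqrt (by positivity) using 1
    · simp only [Real.sqrt_sq (norm_nonneg _)]
    · rw [Real.sqrt_sq hN.le]; ring
  exact (hnorm.inv hN.ne').congr_deriv (by field_simp)

theorem ContDiff.normalize {n : WithTop ℕ∞} (hv : ContDiff ℝ n v) (h0 : ∀ t, v t ≠ 0) :
    ContDiff ℝ n (fun t => ‖v t‖⁻¹ • v t) :=
  ((hv.norm ℝ h0).inv fun t => norm_ne_zero_iff.2 (h0 t)).smul hv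

theorem deriv_normalize (hv : ∀ t, HasDerivAt v (v₁ t) t) (h0 : ∀ t, v t ≠ 0) :
    deriv (fun t => ‖v t‖⁻¹ • v t)
      = fun t => ‖v t‖⁻¹ • v₁ t - (⟪v t, v₁ t⟫ * ‖v t‖⁻¹ ^ 3) • v t := by
  funext t
  refine (((hv t).norm_inv (h0 t)).smul (hv t)).deriv.trans ?_
  rw [neg_smul, ← sub_eq_add_neg]

theorem norm_deriv_normalize_le (hv : ∀ t, HasDerivAt v (v₁ t) t) (h0 : ∀ t, v t ≠ 0) (t : ℝ) :
    ‖deriv (fun t => ‖v t‖⁻¹ • v t) t‖ ≤ 2 * (‖v₁ t‖ / ‖v t‖) := by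
  have hN : 0 < ‖v t‖ := norm_pos_iff.2 (h0 t)
  have hρ : |⟪v t, v₁ t⟫| ≤ ‖v t‖ * ‖v₁ t‖ := abs_real_inner_le_norm _ _
  rw [deriv_normalize hv h0]
  calc ‖‖v t‖⁻¹ • v₁ t - (⟪v t, v₁ t⟫ * ‖v t‖⁻¹ ^ 3) • v t‖
      ≤ ‖v t‖⁻¹ * ‖v₁ t‖ + |⟪v t, v₁ t⟫| * ‖v t‖⁻¹ ^ 3 * ‖v t‖ := by
        refine (norm_sub_le _ _).trans ?_
        simp only [norm_smul, norm_mul, norm_inv, norm_pow, Real.norm_eq_abs, abs_norm]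
        rfl
    _ ≤ ‖v t‖⁻¹ * ‖v₁ t‖ + (‖v t‖ * ‖v₁ t‖) * ‖v t‖⁻¹ ^ 3 * ‖v t‖ := by gcongr
    _ = 2 * (‖v₁ t‖ / ‖v t‖) := by field_simp; ring

theorem norm_deriv_deriv_normalize_le (hv : ∀ t, HasDerivAt v (v₁ t) t)
    (hv₁ : ∀ t, HasDerivAt v₁ (v₂ t) t) (h0 : ∀ t, v t ≠ 0) (t : ℝ) :
    ‖deriv (deriv (fun t => ‖v t‖⁻¹ • v t)) t‖
      ≤ 6 * (‖v₁ t‖ / ‖v t‖) ^ 2 + 2 * (‖v₂ t‖ / ‖v t‖) := by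
  have hr := (hv t).norm_inv (h0 t)
  have hd : HasDerivAt (fun t => ‖v t‖⁻¹ • v₁ t - (⟪v t, v₁ t⟫ * ‖v t‖⁻¹ ^ 3) • v t)
      (‖v t‖⁻¹ • v₂ t - (2 * (⟪v t, v₁ t⟫ * ‖v t‖⁻¹ ^ 3)) • v₁ t
        - ((⟪v t, v₂ t⟫ + ⟪v₁ t, v₁ t⟫) * ‖v t‖⁻¹ ^ 3 - 3 * ⟪v t, v₁ t⟫ ^ 2 * ‖v t‖⁻¹ ^ 5)
          • v t) t :=
    ((hr.smul (hv₁ t)).sub ((((hv t).inner ℝ (hv₁ t)).mul (hr.pow 3)).smul (hv t))).congr_deriv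
      (by simp only [Pi.mul_apply, Pi.pow_apply]; norm_num; module)
  rw [deriv_normalize hv h0, hd.deriv]
  set N := ‖v t‖
  set ρ := ⟪v t, v₁ t⟫
  set ρ' := ⟪v t, v₂ t⟫ + ⟪v₁ t, v₁ t⟫
  have hN : 0 < N := norm_pos_iff.2 (h0 t)
  have hρ : |ρ| ≤ N * ‖v₁ t‖ := abs_real_inner_le_norm _ _
  have hρ' : |ρ'| ≤ N * ‖v₂ t‖ + ‖v₁ t‖ * ‖v₁ t‖ :=
    (abs_add_le _ _).trans (add_le_add (abs_real_inner_le_norm _ _) (abs_real_inner_le_norm _ _))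
  calc _ ≤ N⁻¹ * ‖v₂ t‖ + 2 * (|ρ| * N⁻¹ ^ 3) * ‖v₁ t‖
          + (|ρ'| * N⁻¹ ^ 3 + 3 * |ρ| ^ 2 * N⁻¹ ^ 5) * N := by
        refine (norm_sub_le_of_le (norm_sub_le _ _) le_rfl).trans ?_
        simp only [norm_smul, Real.norm_eq_abs, abs_mul, abs_inv, abs_pow, abs_two, abs_of_pos hN]
        gcongr
        refine (abs_sub _ _).trans_eq ?_
        simp only [abs_mul, abs_pow, abs_inv, abs_of_pos hN, abs_of_pos (three_pos : (0:ℝ) < 3)]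
    _ ≤ N⁻¹ * ‖v₂ t‖ + 2 * ((N * ‖v₁ t‖) * N⁻¹ ^ 3) * ‖v₁ t‖
          + ((N * ‖v₂ t‖ + ‖v₁ t‖ * ‖v₁ t‖) * N⁻¹ ^ 3 + 3 * (N * ‖v₁ t‖) ^ 2 * N⁻¹ ^ 5) * N := by
        gcongr
    _ = 6 * (‖v₁ t‖ / N) ^ 2 + 2 * (‖v₂ t‖ / N) := by field_simp; ring

end Normalize

theorem exists_pos_le_one_mul_rpow_le (K : ℝ) {α c : ℝ} (hα : 0 < α) (hc : 0 < c) :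
    ∃ ε, 0 < ε ∧ ε ≤ 1 ∧ K * ε ^ α ≤ c := by
  have h : Tendsto (fun ε : ℝ => K * ε ^ α) (𝓝[>] 0) (𝓝 0) := by
    simpa [Real.zero_rpow hα.ne'] using
      ((Real.continuousAt_rpow_const 0 α (Or.inr hα.le)).tendsto.const_mul K).mono_left
        nhdsWithin_le_nhds
  obtain ⟨ε, hεK, hε⟩ := ((h.eventually (ge_mem_nhds hc)).and (Ioc_mem_nhdsGT one_pos)).exists
  exact ⟨ε, hε.1, hε.2, hεK⟩

theorem IsMollifier.deriv_mollify {n : ℕ} {η : ℝ → ℝ} (hη : IsMollifier η) {ε K : ℝ} (hε : 0 < ε)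
    {γ : ℝ → En n} (hγ : ContDiff ℝ 1 γ) (hK : ∀ x, ‖deriv γ x‖ ≤ K) :
    deriv (mollify η ε γ) = scaledMollifier η ε ⋆[lsmul ℝ ℝ] deriv γ := by
  rw [mollify_eq_convolution]
  funext x
  exact (hasDerivAt_convolution_of_contDiff_one hη.contDiff_scaledMollifier.continuous
    (hη.hasCompactSupport_scaledMollifier hε) hγ hK x).deriv

theorem IsW2p.norm_convolution_deriv_sub_le {n : ℕ} {p M ε : ℝ} {η : ℝ → ℝ} {γ γ₂ : ℝ → En n}
    (hγ : IsW2p p 1 γ γ₂) (hp : 1 ≤ p) (hM : 0 ≤ M) (hw : w1pNormD p 1 (deriv γ) γ₂ ≤ M)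
    (hη : IsMollifier η) (hε : 0 < ε) (hε1 : ε ≤ 1) (x : ℝ) :
    ‖(scaledMollifier η ε ⋆[lsmul ℝ ℝ] deriv γ) x - deriv γ x‖
      ≤ 2 * M * ε ^ (1 - 1 / p) := by
  have hα : 0 ≤ 1 - 1 / p := by rw [sub_nonneg, div_le_one (by linarith)]; exact hp
  refine norm_convolution_sub_le hη.contDiff_scaledMollifier.continuous
    (hη.hasCompactSupport_scaledMollifier hε) (hη.scaledMollifier_nonneg hε)
    (hη.integral_scaledMollifier hε) (hγ.contDiff.continuous_deriv le_rfl) fun y hy => ?_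
  have hy : |y| ≤ ε := not_lt.1 fun h => hy (hη.scaledMollifier_eq_zero hε h.le)
  calc _ ≤ 2 * M * |x - y - x| ^ (1 - 1 / p) :=
        hγ.norm_deriv_sub_le one_pos hp hM hw (by simpa using hy.trans hε1)
    _ ≤ 2 * M * ε ^ (1 - 1 / p) := by gcongr; simpa using hy

theorem exists_norm_deriv_normalize_convolution_le {E : Type*} [NormedAddCommGroup E]
    [InnerProductSpace ℝ E] [CompleteSpace E] {ψ : ℝ → ℝ} {m : ℝ}
    (hψ : ContDiff ℝ (⊤ : ℕ∞) ψ) (hψs : HasCompactSupport ψ) (hm : 0 < m) :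
    ∃ C > 0, ∀ g : ℝ → E, Continuous g → (∀ x, ‖g x‖ ≤ 1) →
      (∀ x, m ≤ ‖(ψ ⋆[lsmul ℝ ℝ] g) x‖) → ∀ x,
        ‖deriv (fun t => ‖(ψ ⋆[lsmul ℝ ℝ] g) t‖⁻¹ •
          (ψ ⋆[lsmul ℝ ℝ] g) t) x‖ ≤ C ∧
        ‖deriv (deriv (fun t => ‖(ψ ⋆[lsmul ℝ ℝ] g) t‖⁻¹ •
          (ψ ⋆[lsmul ℝ ℝ] g) t)) x‖ ≤ C := by
  have hψ' : ContDiff ℝ (⊤ : ℕ∞) (deriv ψ) := (contDiff_infty_iff_deriv.1 hψ).2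
  have hψ'' : ContDiff ℝ (⊤ : ℕ∞) (deriv (deriv ψ)) := (contDiff_infty_iff_deriv.1 hψ').2
  set a := (∫ y, |deriv ψ y|) / m
  set b := (∫ y, |deriv (deriv ψ) y|) / m
  have ha : 0 ≤ a := by positivity
  have hb : 0 ≤ b := by positivity
  refine ⟨1 + 2 * a + 6 * a ^ 2 + 2 * b, by positivity, fun g hg hg1 hlow x => ?_⟩
  have hv₁ := hψs.hasDerivAt_convolution_left (lsmul ℝ ℝ)
    (hψ.of_le (by simp)) (hg.locallyIntegrable (μ := volume))
  have hv₂ := hψs.deriv.hasDerivAt_convolution_left (lsmul ℝ ℝ)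
    (hψ'.of_le (by simp)) (hg.locallyIntegrable (μ := volume))
  have hv0 : ∀ x, (ψ ⋆[lsmul ℝ ℝ] g) x ≠ 0 := fun x =>
    norm_pos_iff.1 (hm.trans_le (hlow x))
  have hr₁ : ‖(deriv ψ ⋆[lsmul ℝ ℝ] g) x‖
      / ‖(ψ ⋆[lsmul ℝ ℝ] g) x‖ ≤ a :=
    div_le_div₀ (by positivity) ((norm_convolution_le
      (hψ'.continuous.integrable_of_hasCompactSupport hψs.deriv) hg1 x).trans_eq (mul_one _))
      hm (hlow x)
  have hr₂ : ‖(deriv (deriv ψ) ⋆[lsmul ℝ ℝ] g) x‖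
      / ‖(ψ ⋆[lsmul ℝ ℝ] g) x‖ ≤ b :=
    div_le_div₀ (by positivity) ((norm_convolution_le
      (hψ''.continuous.integrable_of_hasCompactSupport hψs.deriv.deriv) hg1 x).trans_eq (mul_one _))
      hm (hlow x)
  have hr₀ : 0 ≤ ‖(deriv ψ ⋆[lsmul ℝ ℝ] g) x‖
      / ‖(ψ ⋆[lsmul ℝ ℝ] g) x‖ := by positivity
  constructor
  · nlinarith [norm_deriv_normalize_le hv₁ hv0 x]
  · nlinarith [norm_deriv_deriv_normalize_le hv₁ hv₂ hv0 x]

/-- Corollary 2.5: the unit tangent map `τ : ℝ/ℤ → S^{n−1}` of the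
mollified curve is smooth and its first and second derivatives are bounded by a constant
`C = C(p, M)`. -/
theorem stmt_5 {n : ℕ} (p M : ℝ) (hp : 2 < p) (hM : 0 < M)
    (η : ℝ → ℝ) (hη : IsMollifier η) :
    ∃ ε > (0:ℝ), ∃ C > (0:ℝ), ∀ (γ γ₂ : ℝ → En n), IsW2p p 1 γ γ₂ → ArcLength γ →
      w1pNormD p 1 (deriv γ) γ₂ ≤ M →
      (∀ x, deriv (mollify η ε γ) x ≠ 0) ∧
      (∀ x, ‖‖deriv (mollify η ε γ) x‖⁻¹ • deriv (mollify η ε γ) x - deriv γ x‖ ≤ 1 / 4) ∧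
      ContDiff ℝ (⊤ : ℕ∞)
        (fun y => ‖deriv (mollify η ε γ) y‖⁻¹ • deriv (mollify η ε γ) y) ∧
      (∀ x, ‖‖deriv (mollify η ε γ) x‖⁻¹ • deriv (mollify η ε γ) x‖ = 1) ∧
      (∀ x, ‖deriv (fun y => ‖deriv (mollify η ε γ) y‖⁻¹ • deriv (mollify η ε γ) y) x‖
        ≤ C) ∧
      (∀ x, ‖deriv (deriv
          (fun y => ‖deriv (mollify η ε γ) y‖⁻¹ • deriv (mollify η ε γ) y)) x‖ ≤ C) := by
  have hα : 0 < 1 - 1 / p := by rw [sub_pos, div_lt_one (by linarith)]; linarith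
  obtain ⟨ε, hε, hε1, hεM⟩ :=
    exists_pos_le_one_mul_rpow_le (2 * M) hα (by norm_num : (0 : ℝ) < 1 / 8)
  have hψ := hη.contDiff_scaledMollifier (ε := ε)
  have hψs := hη.hasCompactSupport_scaledMollifier hε
  obtain ⟨C, hC, hbound⟩ :=
    exists_norm_deriv_normalize_convolution_le (E := En n) hψ hψs one_half_pos
  refine ⟨ε, hε, C, hC, fun γ γ₂ hγ harc hw => ?_⟩
  set v := scaledMollifier η ε ⋆[lsmul ℝ ℝ] deriv γ
  have hclose : ∀ x, ‖v x - deriv γ x‖ ≤ 1 / 8 :=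
    fun x => (hγ.norm_convolution_deriv_sub_le (by linarith) hM.le hw hη hε hε1 x).trans hεM
  have hlow : ∀ x, 1 / 2 ≤ ‖v x‖ := fun x => by
    linarith [norm_sub_norm_le (deriv γ x) (v x), harc x, norm_sub_rev (v x) (deriv γ x), hclose x]
  have hv0 : ∀ x, v x ≠ 0 := fun x => norm_pos_iff.1 (one_half_pos.trans_le (hlow x))
  have hγ' : Continuous (deriv γ) := hγ.contDiff.continuous_deriv le_rfl
  have hγ1 : ∀ x, ‖deriv γ x‖ ≤ 1 := fun x => (harc x).le
  rw [hη.deriv_mollify hε hγ.contDiff hγ1]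
  exact ⟨hv0, fun x => (norm_inv_norm_smul_sub_le (harc x)).trans (by linarith [hclose x]),
    (hψs.contDiff_convolution_left _ hψ hγ'.locallyIntegrable).normalize hv0,
    fun x => norm_smul_inv_norm (hv0 x), fun x => (hbound _ hγ' hγ1 hlow x).1,
    fun x => (hbound _ hγ' hγ1 hlow x).2⟩
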